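/- arXiv:2211.08381 — 2 statements merged into one kernel-verified Lean document; each statement's English description precedes it below -/
import Mathlib

section
/- Let f be a monotone submodular function on 2^{[n]} with n ≥ 2. Fix a new element 0 ∉ [n] and define g on subsets of {0} ∪ [n] by g(A) = f(A) if 0 ∉ A, and g(A) = f((A \ {0}) ∪ {n-1, n}) if 0 ∈ A. Then g is submodular: g(A) + g(B) ≥ g(A ∪ B) + g(A ∩ B) for all A, B ⊆ {0} ∪ [n]. -/
theorem stmt_7 (n : ℕ) (hn : 2 ≤ n) (f : Finset ℕ → ℝ)
    (hmono : ∀ A B, A ⊆ Finset.Icc 1 n → B ⊆ Finset.Icc 1 n → A ⊆ B → f A ≤ f B)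
    (hsub : ∀ A B, A ⊆ Finset.Icc 1 n → B ⊆ Finset.Icc 1 n →
      f (A ∪ B) + f (A ∩ B) ≤ f A + f B)
    (g : Finset ℕ → ℝ)
    (hgdef : ∀ A ⊆ insert 0 (Finset.Icc 1 n),
      g A = if 0 ∈ A then f ((A.erase 0) ∪ {n - 1, n}) else f A) :
    ∀ A B, A ⊆ insert 0 (Finset.Icc 1 n) → B ⊆ insert 0 (Finset.Icc 1 n) →
      g (A ∪ B) + g (A ∩ B) ≤ g A + g B := by
  intro A B hA hB
  set S : Finset ℕ := {n - 1, n} with hS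
  have hSsub : S ⊆ Finset.Icc 1 n := by
    intro x hx
    simp [hS] at hx
    rcases hx with h | h <;> simp [Finset.mem_Icc] <;> omega
  have herase : ∀ C : Finset ℕ, C ⊆ insert 0 (Finset.Icc 1 n) →
      C.erase 0 ⊆ Finset.Icc 1 n := by
    intro C hC x hx
    have hx0 := Finset.ne_of_mem_erase hx
    have := hC (Finset.mem_of_mem_erase hx)
    simp only [Finset.mem_insert] at this
    tauto
  have hA' := herase A hA
  have hB' := herase B hB
  have hAB : A ∪ B ⊆ insert 0 (Finset.Icc 1 n) := Finset.union_subset hA hB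
  have hABi : A ∩ B ⊆ insert 0 (Finset.Icc 1 n) :=
    Finset.inter_subset_left.trans hA
  rw [hgdef A hA, hgdef B hB, hgdef _ hAB, hgdef _ hABi]
  by_cases h0A : 0 ∈ A <;> by_cases h0B : 0 ∈ B
  · simp only [h0A, h0B, Finset.mem_union, Finset.mem_inter, true_and, or_self,
      if_true]
    have e1 : (A ∪ B).erase 0 ∪ S = (A.erase 0 ∪ S) ∪ (B.erase 0 ∪ S) := by
      ext x; simp; tauto
    have e2 : (A ∩ B).erase 0 ∪ S = (A.erase 0 ∪ S) ∩ (B.erase 0 ∪ S) := by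
      ext x; simp; tauto
    rw [e1, e2]
    exact hsub _ _ (Finset.union_subset hA' hSsub) (Finset.union_subset hB' hSsub)
  · have hBIcc : B ⊆ Finset.Icc 1 n := by
      intro x hx
      have := hB hx
      simp [Finset.mem_insert] at this
      rcases this with h | h
      · exact absurd (h ▸ hx) h0B
      · simpa [Finset.mem_Icc] using h
    have h0u : (0 : ℕ) ∈ A ∪ B := Finset.mem_union_left _ h0A
    have h0i : (0 : ℕ) ∉ A ∩ B := by simp [h0B]
    simp only [h0A, h0B, h0u, h0i, if_true, if_false]
    have e1 : (A ∪ B).erase 0 ∪ S = (A.erase 0 ∪ S) ∪ B := by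
      ext x
      have hx : x ∈ B → x ≠ 0 := fun h e => h0B (e ▸ h)
      simp; tauto
    have key := hsub (A.erase 0 ∪ S) B (Finset.union_subset hA' hSsub) hBIcc
    rw [e1]
    have hmon : f (A ∩ B) ≤ f ((A.erase 0 ∪ S) ∩ B) := by
      apply hmono _ _ (Finset.inter_subset_right.trans hBIcc)
        (Finset.inter_subset_right.trans hBIcc)
      intro x hx
      simp only [Finset.mem_inter] at hx ⊢
      exact ⟨Finset.mem_union_left _ (Finset.mem_erase.mpr ⟨fun e => h0B (e ▸ hx.2), hx.1⟩), hx.2⟩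
    linarith
  · have hAIcc : A ⊆ Finset.Icc 1 n := by
      intro x hx
      have := hA hx
      simp [Finset.mem_insert] at this
      rcases this with h | h
      · exact absurd (h ▸ hx) h0A
      · simpa [Finset.mem_Icc] using h
    have h0u : (0 : ℕ) ∈ A ∪ B := Finset.mem_union_right _ h0B
    have h0i : (0 : ℕ) ∉ A ∩ B := by simp [h0A]
    simp only [h0A, h0B, h0u, h0i, if_true, if_false]
    have e1 : (A ∪ B).erase 0 ∪ S = A ∪ (B.erase 0 ∪ S) := by
      ext x
      have hx : x ∈ A → x ≠ 0 := fun h e => h0A (e ▸ h)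
      simp; tauto
    have key := hsub A (B.erase 0 ∪ S) hAIcc (Finset.union_subset hB' hSsub)
    rw [e1]
    have hmon : f (A ∩ B) ≤ f (A ∩ (B.erase 0 ∪ S)) := by
      apply hmono _ _ (Finset.inter_subset_left.trans hAIcc)
        (Finset.inter_subset_left.trans hAIcc)
      intro x hx
      simp only [Finset.mem_inter] at hx ⊢
      exact ⟨hx.1, Finset.mem_union_left _ (Finset.mem_erase.mpr ⟨fun e => h0A (e ▸ hx.1), hx.2⟩)⟩
    linarith
  · have hAIcc : A ⊆ Finset.Icc 1 n := by
      intro x hx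
      have := hA hx
      simp [Finset.mem_insert] at this
      rcases this with h | h
      · exact absurd (h ▸ hx) h0A
      · simpa [Finset.mem_Icc] using h
    have hBIcc : B ⊆ Finset.Icc 1 n := by
      intro x hx
      have := hB hx
      simp [Finset.mem_insert] at this
      rcases this with h | h
      · exact absurd (h ▸ hx) h0B
      · simpa [Finset.mem_Icc] using h
    have h0u : (0 : ℕ) ∉ A ∪ B := by simp [h0A, h0B]
    have h0i : (0 : ℕ) ∉ A ∩ B := by simp [h0A]
    simp only [h0A, h0B, h0u, h0i, if_false]
    exact hsub A B hAIcc hBIcc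
end

section
/- Suppose g is a monotone submodular function on subsets of U' = {x_1,y_1,…,x_n,y_n} with g(∅)=0, satisfying for every i ∈ [n]: g({x_i, y_i}) ≤ g({x_i}) and g({x_i, y_i}) ≤ g({y_i}). Then g({x_1,…,x_n}) = g(U'). -/
/-!
Read `g (D ∪ C) ≤ g D` as the functional dependency "`D` determines `C`". Submodularity plus
monotonicity gives diminishing returns, so a dependency `D → C` persists over every superset `B`
of `D`: adding `C` to `B` does not increase `g`. Starting from `X = {x₁, …, xₙ}` and adding the
`yᵢ` one at a time, each step is covered by the dependency `xᵢ → yᵢ`, so `g U' ≤ g X`;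
monotonicity gives the reverse inequality.
-/

namespace Finset

variable {α ι : Type*} [DecidableEq α] {g : Finset α → ℝ}

theorem submodular_add_le_add_union_of_subset
    (hmono : ∀ A B, A ⊆ B → g A ≤ g B) (hsub : ∀ A B, g (A ∪ B) + g (A ∩ B) ≤ g A + g B)
    {A B : Finset α} (C : Finset α) (hAB : A ⊆ B) :
    g (B ∪ C) + g A ≤ g B + g (A ∪ C) := by
  have hA : A ⊆ (A ∪ C) ∩ B := subset_inter subset_union_left hAB
  have hunion : A ∪ C ∪ B = B ∪ C := by
    rw [union_comm A C, union_assoc, union_eq_right.mpr hAB, union_comm]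
  have := hsub (A ∪ C) B
  rw [hunion] at this
  linarith [hmono _ _ hA]

theorem union_le_of_dependency_of_subset
    (hmono : ∀ A B, A ⊆ B → g A ≤ g B) (hsub : ∀ A B, g (A ∪ B) + g (A ∩ B) ≤ g A + g B)
    {D B C : Finset α} (hDC : g (D ∪ C) ≤ g D) (hDB : D ⊆ B) :
    g (B ∪ C) ≤ g B := by
  linarith [submodular_add_le_add_union_of_subset hmono hsub C hDB]

theorem union_biUnion_le_of_dependencies
    (hmono : ∀ A B, A ⊆ B → g A ≤ g B) (hsub : ∀ A B, g (A ∪ B) + g (A ∩ B) ≤ g A + g B)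
    (A : Finset α) (s : Finset ι) (D C : ι → Finset α)
    (hDA : ∀ i ∈ s, D i ⊆ A) (hDC : ∀ i ∈ s, g (D i ∪ C i) ≤ g (D i)) :
    g (A ∪ s.biUnion C) ≤ g A := by
  classical
  induction s using Finset.induction with
  | empty => simp
  | insert i s _ ih =>
    have hstep : g (A ∪ s.biUnion C ∪ C i) ≤ g (A ∪ s.biUnion C) :=
      union_le_of_dependency_of_subset hmono hsub (hDC i (mem_insert_self i s))
        ((hDA i (mem_insert_self i s)).trans subset_union_left)
    rw [biUnion_insert, union_comm (C i), ← union_assoc]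
    exact hstep.trans (ih (fun j hj => hDA j (mem_insert_of_mem hj))
      (fun j hj => hDC j (mem_insert_of_mem hj)))

end Finset

open Finset in
theorem stmt_12_general (n : ℕ) (g : Finset (Fin n × Bool) → ℝ)
    (hmono : ∀ A B, A ⊆ B → g A ≤ g B)
    (hsub : ∀ A B, g (A ∪ B) + g (A ∩ B) ≤ g A + g B)
    (hfd1 : ∀ i : Fin n, g {(i, false), (i, true)} ≤ g {(i, false)}) :
    g (Finset.univ.image (fun i : Fin n => (i, false))) = g Finset.univ := by
  set X := univ.image (fun i : Fin n => (i, false))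
  have hcover : X ∪ univ.biUnion (fun i => {(i, true)}) = univ := by
    ext ⟨i, b⟩
    cases b <;> simp [X]
  have hle := union_biUnion_le_of_dependencies hmono hsub X univ
    (fun i => {(i, false)}) (fun i => {(i, true)})
    (fun i _ => by simp [X]) (fun i _ => by simpa only [← insert_eq] using hfd1 i)
  rw [hcover] at hle
  exact le_antisymm (hmono _ _ (subset_univ _)) hle

theorem stmt_12 (n : ℕ) (g : Finset (Fin n × Bool) → ℝ)
    (hmono : ∀ A B, A ⊆ B → g A ≤ g B)
    (hsub : ∀ A B, g (A ∪ B) + g (A ∩ B) ≤ g A + g B)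
    (hzero : g ∅ = 0)
    (hfd1 : ∀ i : Fin n, g {(i, false), (i, true)} ≤ g {(i, false)})
    (hfd2 : ∀ i : Fin n, g {(i, false), (i, true)} ≤ g {(i, true)}) :
    g (Finset.univ.image (fun i : Fin n => (i, false))) = g Finset.univ :=
  stmt_12_general n g hmono hsub hfd1
end
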